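/- Let X ∈ ℝ^{n×k} be a matrix each of whose columns has unit ℓ₂ norm and is orthogonal to the all-ones vector (1ᵀ·X_{:,i} = 0 for all i). Let v ∈ ℝⁿ be a unit vector and set c := vᵀ·1/√n. Then μ_v(X) ≥ k·c². -/

import Mathlib

/-!
Column by column, `μ_v(X)` is `∑ⱼ ‖xⱼ - ⟪v, xⱼ⟫ v‖² = ∑ⱼ (1 - ⟪v, xⱼ⟫²)`, and for unit vectors
`1 - ⟪v, x⟫²` is also `‖v - ⟪x, v⟫ x‖²`. Since `x ⟂ 𝟙`, `⟪𝟙, v⟫ = ⟪𝟙, v - ⟪x, v⟫ x⟫`, so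
Cauchy–Schwarz gives `c² = ⟪𝟙, v⟫² / ‖𝟙‖² ≤ ‖v - ⟪x, v⟫ x‖²` for every column.
-/

open Matrix

/-- `μ_v(X) = ‖X − v·vᵀ·X‖_F²`. -/
noncomputable def muV {n k : ℕ} (v : Fin n → ℝ) (X : Matrix (Fin n) (Fin k) ℝ) : ℝ :=
  ∑ r, ∑ j, ((X - (Matrix.of fun a b => v a * v b) * X) r j) ^ 2

open RealInnerProductSpace

section InnerProductSpace

variable {E : Type*} [NormedAddCommGroup E] [InnerProductSpace ℝ E]

theorem norm_sub_inner_smul_sq {v : E} (hv : ‖v‖ = 1) (x : E) :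
    ‖x - ⟪v, x⟫ • v‖ ^ 2 = ‖x‖ ^ 2 - ⟪v, x⟫ ^ 2 := by
  rw [norm_sub_sq_real, inner_smul_right, norm_smul, Real.norm_eq_abs, hv, mul_one, sq_abs,
    real_inner_comm x v]
  ring

theorem inner_sq_le_norm_sq_mul_norm_sub_inner_smul_sq {w x : E} (hwx : ⟪w, x⟫ = 0) (v : E) :
    ⟪w, v⟫ ^ 2 ≤ ‖w‖ ^ 2 * ‖v - ⟪x, v⟫ • x‖ ^ 2 := by
  have hproj : ⟪w, v⟫ = ⟪w, v - ⟪x, v⟫ • x⟫ := by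
    rw [inner_sub_right, inner_smul_right, hwx, mul_zero, sub_zero]
  rw [hproj, ← mul_pow, ← sq_abs]
  gcongr
  exact abs_real_inner_le_norm _ _

theorem inner_sq_div_norm_sq_le_norm_sub_inner_smul_sq {v x w : E} (hv : ‖v‖ = 1)
    (hx : ‖x‖ = 1) (hwx : ⟪w, x⟫ = 0) : ⟪w, v⟫ ^ 2 / ‖w‖ ^ 2 ≤ ‖x - ⟪v, x⟫ • v‖ ^ 2 := by
  have hsymm : ‖x - ⟪v, x⟫ • v‖ = ‖v - ⟪x, v⟫ • x‖ := by
    rw [← sq_eq_sq₀ (norm_nonneg _) (norm_nonneg _), norm_sub_inner_smul_sq hv,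
      norm_sub_inner_smul_sq hx, hv, hx, real_inner_comm]
  rw [hsymm]
  exact div_le_of_le_mul₀ (sq_nonneg _) (sq_nonneg _)
    ((inner_sq_le_norm_sq_mul_norm_sub_inner_smul_sq hwx v).trans_eq (mul_comm _ _))

end InnerProductSpace

theorem muV_eq_sum_norm_sq {n k : ℕ} (v : Fin n → ℝ) (X : Matrix (Fin n) (Fin k) ℝ) :
    muV v X = ∑ j, ‖WithLp.toLp 2 (Xᵀ j) - ⟪WithLp.toLp 2 v, WithLp.toLp 2 (Xᵀ j)⟫ •
      WithLp.toLp 2 v‖ ^ 2 := by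
  simp only [EuclideanSpace.real_norm_sq_eq, muV]
  rw [Finset.sum_comm]
  simp [Matrix.mul_apply, PiLp.inner_apply, Finset.mul_sum, mul_comm, mul_left_comm]

/-- If every column of `X ∈ ℝ^{n×k}` has unit ℓ₂-norm and is orthogonal to
the all-ones vector, then for any unit vector `v`, with `c := vᵀ·1/√n`, `μ_v(X) ≥ k·c²`. -/
theorem stmt_18 {n k : ℕ}
    (X : Matrix (Fin n) (Fin k) ℝ)
    (hXunit : ∀ j, Real.sqrt (∑ r, (X r j) ^ 2) = 1)
    (hXorth : ∀ j, ∑ r, X r j = 0)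
    (v : Fin n → ℝ) (hv : Real.sqrt (∑ r, v r ^ 2) = 1)
    (c : ℝ) (hc : c = (∑ r, v r) / Real.sqrt n) :
    k * c ^ 2 ≤ muV v X := by
  set one : EuclideanSpace ℝ (Fin n) := WithLp.toLp 2 fun _ => 1
  have hc_sq : c ^ 2 = ⟪one, WithLp.toLp 2 v⟫ ^ 2 / ‖one‖ ^ 2 := by
    simp [hc, one, div_pow, PiLp.inner_apply, EuclideanSpace.real_norm_sq_eq]
  have hcol : ∀ j, ‖WithLp.toLp 2 (Xᵀ j)‖ = 1 := fun j => by
    simpa [EuclideanSpace.norm_eq] using hXunit j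
  have horth : ∀ j, ⟪one, WithLp.toLp 2 (Xᵀ j)⟫ = 0 := fun j => by
    simpa [one, PiLp.inner_apply] using hXorth j
  have hv' : ‖(WithLp.toLp 2 v : EuclideanSpace ℝ (Fin n))‖ = 1 := by
    simpa [EuclideanSpace.norm_eq] using hv
  calc (k : ℝ) * c ^ 2 = ∑ _j : Fin k, c ^ 2 := by simp
    _ ≤ muV v X := by
      rw [muV_eq_sum_norm_sq, hc_sq]
      exact Finset.sum_le_sum fun j _ =>
        inner_sq_div_norm_sq_le_norm_sub_inner_smul_sq hv' (hcol j) (horth j)
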